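/- arXiv:2601.17634 — 5 statements merged into one kernel-verified Lean document; each statement's English description precedes it below -/
import Mathlib

section
/- If the weight array w_{n,k} satisfies the recurrence w_{n+1,k} = α_{k-1} w_{n,k-1} + γ_k w_{n,k} + β_k w_{n,k+1} with w_{0,0}=1 and w_{n,k}=0 for k<0 or k>n, where α_k = a·k+α₀, β_k = b·k+β₀, γ_k = c·k+γ₀, then the polynomials P_n(x) = Σ_{k=0}^n w_{n,k} x^k satisfy P_{n+1}(x) = (a x² + c x + b) P_n'(x) + (α₀ x + γ₀) P_n(x) + (β₀ - b)·(P_n(x) - P_n(0))/x. -/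
/-!
Multiply by `x`. Substituting the recurrence into `x P_{n+1}(x) = ∑ w_{n+1,k} x^{k+1}` and shifting
the index of the `α`- and `β`-terms turns the right-hand side into `∑ (x² α_k + x γ_k + β_{k-1}) w_{n,k} x^k`,
up to the boundary term `β_{-1} w_{n,0}` lost in the shift. With linear `α, β, γ` the parts of this sum
proportional to `k` assemble into the Euler operator `x P_n'(x)`, and the remaining ones into
`P_n(x)`, the boundary term being `(β₀ - b) P_n(0)`.
-/

open Finset

section GeneratingSums

variable {R : Type*} [CommRing R]

theorem mul_sum_range_comp_add_one (u : ℤ → R) (x : R) (m : ℕ) :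
    x * ∑ k ∈ range m, u (k + 1) * x ^ k = ∑ k ∈ range (m + 1), u k * x ^ k - u 0 := by
  rw [sum_range_succ', mul_sum]
  simp only [Nat.cast_add, Nat.cast_one, Nat.cast_zero, pow_zero, mul_one, pow_succ]
  ring_nf

theorem sum_range_add_of_eq_zero (u : ℤ → R) (x : R) (n : ℕ) (hu : ∀ k : ℤ, n < k → u k = 0)
    (j : ℕ) : ∑ k ∈ range (n + 1 + j), u k * x ^ k = ∑ k ∈ range (n + 1), u k * x ^ k := by
  induction j with
  | zero => rfl
  | succ j ih => rw [← add_assoc, sum_range_succ, ih, hu _ (by omega), zero_mul, add_zero]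

theorem mul_sum_range_of_three_term_rec (α β γ v v' : ℤ → R) (n : ℕ)
    (hv : ∀ k : ℤ, (k < 0 ∨ (n : ℤ) < k) → v k = 0)
    (hrec : ∀ k : ℤ, v' k = α (k - 1) * v (k - 1) + γ k * v k + β k * v (k + 1)) (x : R) :
    x * ∑ k ∈ range (n + 2), v' k * x ^ k
      = ∑ k ∈ range (n + 1), (x ^ 2 * α k + x * γ k + β (k - 1)) * v k * x ^ k
        - β (-1) * v 0 := by
  have hv_top : ∀ k : ℤ, n < k → v k = 0 := fun k hk => hv k (Or.inr hk)
  have hα : ∑ k ∈ range (n + 2), α (k - 1) * v (k - 1) * x ^ k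
      = x * ∑ k ∈ range (n + 1), α k * v k * x ^ k := by
    have := mul_sum_range_comp_add_one (fun k => α (k - 1) * v (k - 1)) x (n + 1)
    simp only [add_sub_cancel_right, zero_sub, hv (-1) (Or.inl (by norm_num)), mul_zero,
      sub_zero] at this
    rw [this]
  have hγ : ∑ k ∈ range (n + 2), γ k * v k * x ^ k = ∑ k ∈ range (n + 1), γ k * v k * x ^ k :=
    sum_range_add_of_eq_zero (fun k => γ k * v k) x n
      (fun k hk => by rw [hv_top k hk, mul_zero]) 1
  have hβ : x * ∑ k ∈ range (n + 2), β k * v (k + 1) * x ^ k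
      = ∑ k ∈ range (n + 1), β (k - 1) * v k * x ^ k - β (-1) * v 0 := by
    have := mul_sum_range_comp_add_one (fun k => β (k - 1) * v k) x (n + 2)
    simp only [add_sub_cancel_right, zero_sub] at this
    rw [this, sum_range_add_of_eq_zero (fun k => β (k - 1) * v k) x n
      (fun k hk => by rw [hv_top k hk, mul_zero]) 2]
  simp only [hrec, add_mul, sum_add_distrib, mul_add, hβ, hα, hγ, mul_sum]
  ring_nf

end GeneratingSums

theorem mul_deriv_sum_range_mul_pow {𝕜 : Type*} [NontriviallyNormedField 𝕜] (c : ℕ → 𝕜)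
    (m : ℕ) (x : 𝕜) :
    x * deriv (fun y => ∑ k ∈ range m, c k * y ^ k) x = ∑ k ∈ range m, k * c k * x ^ k := by
  rw [deriv_fun_sum fun k _ => ((differentiable_pow k).differentiableAt).const_mul _, mul_sum]
  refine sum_congr rfl fun k _ => ?_
  rw [deriv_const_mul _ (differentiable_pow k).differentiableAt, deriv_pow_field]
  rcases k with _ | k
  · simp
  · rw [Nat.add_sub_cancel, pow_succ]
    ring

theorem stmt_0_general (a b c α₀ β₀ γ₀ : ℝ)
    (w : ℕ → ℤ → ℝ)
    (hz : ∀ (n : ℕ) (k : ℤ), (k < 0 ∨ (n : ℤ) < k) → w n k = 0)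
    (hrec : ∀ (n : ℕ) (k : ℤ),
      w (n + 1) k = (((k : ℝ) - 1) * a + α₀) * w n (k - 1)
        + ((k : ℝ) * c + γ₀) * w n k
        + ((k : ℝ) * b + β₀) * w n (k + 1))
    (P : ℕ → ℝ → ℝ)
    (hP : ∀ (n : ℕ) (x : ℝ), P n x = ∑ k ∈ Finset.range (n + 1), w n k * x ^ k) :
    ∀ (n : ℕ) (x : ℝ), x ≠ 0 →
      P (n + 1) x = (a * x ^ 2 + c * x + b) * deriv (P n) x
        + (α₀ * x + γ₀) * P n x
        + (β₀ - b) * (P n x - P n 0) / x := by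
  intro n x hx
  have hP0 : P n 0 = w n 0 := by simp [hP, zero_pow_eq]
  have hEuler : x * deriv (P n) x = ∑ k ∈ range (n + 1), k * w n k * x ^ k := by
    rw [funext (hP n), mul_deriv_sum_range_mul_pow]
  have hgen := mul_sum_range_of_three_term_rec (fun k => k * a + α₀) (fun k => k * b + β₀)
    (fun k => k * c + γ₀) (w n) (w (n + 1)) n (hz n)
    (fun k => by rw [hrec]; push_cast; ring) x
  rw [← hP] at hgen
  push_cast at hgen
  have hsplit : ∑ k ∈ range (n + 1),
        (x ^ 2 * (k * a + α₀) + x * (k * c + γ₀) + ((k - 1) * b + β₀)) * w n k * x ^ k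
      = (a * x ^ 2 + c * x + b) * ∑ k ∈ range (n + 1), k * w n k * x ^ k
        + (α₀ * x ^ 2 + γ₀ * x + (β₀ - b)) * ∑ k ∈ range (n + 1), w n k * x ^ k := by
    rw [mul_sum, mul_sum, ← sum_add_distrib]
    exact sum_congr rfl fun k _ => by ring
  rw [hsplit, ← hEuler, ← hP, ← hP0] at hgen
  field_simp
  linear_combination hgen

/-- Weighted Motzkin paths with linearly varying multiplicities:
the polynomials `P_n(x) = ∑_{k=0}^n w_{n,k} x^k` satisfy the recurrence
`P_{n+1}(x) = (a x² + c x + b) P_n'(x) + (α₀ x + γ₀) P_n(x) + (β₀ - b)(P_n(x) - P_n(0))/x`. -/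
theorem stmt_0 (a b c α₀ β₀ γ₀ : ℝ)
    (w : ℕ → ℤ → ℝ)
    (h0 : w 0 0 = 1)
    (hz : ∀ (n : ℕ) (k : ℤ), (k < 0 ∨ (n : ℤ) < k) → w n k = 0)
    (hrec : ∀ (n : ℕ) (k : ℤ),
      w (n + 1) k = (((k : ℝ) - 1) * a + α₀) * w n (k - 1)
        + ((k : ℝ) * c + γ₀) * w n k
        + ((k : ℝ) * b + β₀) * w n (k + 1))
    (P : ℕ → ℝ → ℝ)
    (hP : ∀ (n : ℕ) (x : ℝ), P n x = ∑ k ∈ Finset.range (n + 1), w n k * x ^ k) :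
    ∀ (n : ℕ) (x : ℝ), x ≠ 0 →
      P (n + 1) x = (a * x ^ 2 + c * x + b) * deriv (P n) x
        + (α₀ * x + γ₀) * P n x
        + (β₀ - b) * (P n x - P n 0) / x :=
  stmt_0_general a b c α₀ β₀ γ₀ w hz hrec P hP
end

section
/- In the two-real-root case, for x > r₂ the function w(x,t) = exp((α₀ r₁ + γ₀) t) · [ (r₁ - r₂) / ( (x - r₂) - (x - r₁) exp(A(r₁-r₂) t) ) ]^{α₀/A} satisfies ∂w/∂t = A(x-r₁)(x-r₂)·∂w/∂x + (α₀ x + γ₀) w with w(x,0)=1, on the region where the bracketed quantity is positive. -/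
/-!
The ratio `g = (r₁ - r₂) / D`, `D = (x - r₂) - (x - r₁) exp (A (r₁ - r₂) t)`, solves the linear
transport equation `g_t = A (x - r₁)(x - r₂) g_x + A (x - r₁) g` (clear the common denominator `D²`).
Raising to the power `α₀/A` turns the zeroth-order coefficient into `α₀ (x - r₁)`, and the factor
`exp ((α₀ r₁ + γ₀) t)` supplies the remaining `α₀ r₁ + γ₀`.
-/

open Real

theorem deriv_exp_mul_rpow_of_transport {f g : ℝ → ℝ} {t x u f' g' a b k p : ℝ}
    (hf : HasDerivAt f f' t) (hg : HasDerivAt g g' x)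
    (hft : f t = u) (hgx : g x = u) (hu : u ≠ 0) (htransport : f' = a * g' + b * u) :
    deriv (fun s => exp (k * s) * f s ^ p) t
      = a * deriv (fun y => exp (k * t) * g y ^ p) x + (k + p * b) * (exp (k * t) * u ^ p) := by
  have hexp : HasDerivAt (fun s => exp (k * s)) (exp (k * t) * k) t := by
    simpa using ((hasDerivAt_id t).const_mul k).exp
  have hft' : f t ≠ 0 := hft ▸ hu
  have hgx' : g x ≠ 0 := hgx ▸ hu
  have hlhs : HasDerivAt (fun s => exp (k * s) * f s ^ p)
      (exp (k * t) * k * f t ^ p + exp (k * t) * (f' * p * f t ^ (p - 1))) t :=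
    hexp.mul (hf.rpow_const (Or.inl hft'))
  have hrhs : HasDerivAt (fun y => exp (k * t) * g y ^ p)
      (exp (k * t) * (g' * p * g x ^ (p - 1))) x :=
    (hg.rpow_const (Or.inl hgx')).const_mul (exp (k * t))
  rw [hlhs.deriv, hrhs.deriv, hft, hgx, htransport, rpow_sub_one hu]
  field_simp
  ring

namespace TwoRealRoots

variable (A r₁ r₂ : ℝ)

noncomputable def denom (x t : ℝ) : ℝ :=
  (x - r₂) - (x - r₁) * exp (A * (r₁ - r₂) * t)

noncomputable def ratio (x t : ℝ) : ℝ :=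
  (r₁ - r₂) / denom A r₁ r₂ x t

variable {A r₁ r₂}

theorem hasDerivAt_ratio_time {x t : ℝ} (hD : denom A r₁ r₂ x t ≠ 0) :
    HasDerivAt (fun s => ratio A r₁ r₂ x s)
      ((r₁ - r₂) ^ 2 * A * (x - r₁) * exp (A * (r₁ - r₂) * t) / denom A r₁ r₂ x t ^ 2) t := by
  have hE : HasDerivAt (fun s => exp (A * (r₁ - r₂) * s))
      (exp (A * (r₁ - r₂) * t) * (A * (r₁ - r₂))) t := by
    simpa using ((hasDerivAt_id t).const_mul (A * (r₁ - r₂))).exp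
  exact ((hasDerivAt_const t (r₁ - r₂)).div ((hE.const_mul (x - r₁)).const_sub (x - r₂)) hD
    ).congr_deriv (by simp only [denom]; ring)

theorem hasDerivAt_ratio_space {x t : ℝ} (hD : denom A r₁ r₂ x t ≠ 0) :
    HasDerivAt (fun y => ratio A r₁ r₂ y t)
      (-(r₁ - r₂) * (1 - exp (A * (r₁ - r₂) * t)) / denom A r₁ r₂ x t ^ 2) x := by
  have hDx : HasDerivAt (fun y => denom A r₁ r₂ y t) (1 - 1 * exp (A * (r₁ - r₂) * t)) x :=
    ((hasDerivAt_id x).sub_const r₂).sub (((hasDerivAt_id x).sub_const r₁).mul_const _)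
  exact ((hasDerivAt_const x (r₁ - r₂)).div hDx hD).congr_deriv (by simp only [denom]; ring)

theorem ratio_transport {x t : ℝ} (hD : denom A r₁ r₂ x t ≠ 0) :
    (r₁ - r₂) ^ 2 * A * (x - r₁) * exp (A * (r₁ - r₂) * t) / denom A r₁ r₂ x t ^ 2
      = A * (x - r₁) * (x - r₂)
          * (-(r₁ - r₂) * (1 - exp (A * (r₁ - r₂) * t)) / denom A r₁ r₂ x t ^ 2)
        + A * (x - r₁) * ratio A r₁ r₂ x t := by
  rw [ratio]
  simp only [denom] at *
  generalize exp (A * (r₁ - r₂) * t) = E at *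
  field_simp
  ring

end TwoRealRoots

theorem stmt_4_general (A α₀ γ₀ r₁ r₂ : ℝ) (hA : 0 < A) (hr : r₁ < r₂)
    (w : ℝ → ℝ → ℝ)
    (hw : ∀ x t, w x t
      = Real.exp ((α₀ * r₁ + γ₀) * t)
        * ((r₁ - r₂) / ((x - r₂) - (x - r₁) * Real.exp (A * (r₁ - r₂) * t))) ^ (α₀ / A)) :
    (∀ x t, r₂ < x →
        0 < (r₁ - r₂) / ((x - r₂) - (x - r₁) * Real.exp (A * (r₁ - r₂) * t)) →
        deriv (fun s => w x s) t
          = A * (x - r₁) * (x - r₂) * deriv (fun y => w y t) x + (α₀ * x + γ₀) * w x t)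
      ∧ (∀ x, w x 0 = 1) := by
  obtain rfl : w = fun x t =>
      exp ((α₀ * r₁ + γ₀) * t) * TwoRealRoots.ratio A r₁ r₂ x t ^ (α₀ / A) := funext₂ hw
  refine ⟨fun x t _ hpos => ?_, fun x => ?_⟩
  · have hD : TwoRealRoots.denom A r₁ r₂ x t ≠ 0 := (div_ne_zero_iff.1 hpos.ne').2
    rw [deriv_exp_mul_rpow_of_transport (TwoRealRoots.hasDerivAt_ratio_time hD)
      (TwoRealRoots.hasDerivAt_ratio_space hD) rfl rfl hpos.ne'
      (TwoRealRoots.ratio_transport hD)]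
    field_simp
    ring
  · simp [TwoRealRoots.ratio, TwoRealRoots.denom, sub_ne_zero.2 hr.ne]

/-- Two-real-root case: for `x > r₂`, the function
`w(x,t) = exp((α₀ r₁ + γ₀)t) [ (r₁-r₂) / ((x-r₂) - (x-r₁) e^{A(r₁-r₂)t}) ]^{α₀/A}`
solves `∂w/∂t = A(x-r₁)(x-r₂) ∂w/∂x + (α₀ x + γ₀) w` with `w(x,0)=1`,
on the region where the bracketed quantity is positive. -/
theorem stmt_4 (A α₀ γ₀ r₁ r₂ : ℝ) (hA : 0 < A) (hα : 0 < α₀) (hr : r₁ < r₂)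
    (w : ℝ → ℝ → ℝ)
    (hw : ∀ x t, w x t
      = Real.exp ((α₀ * r₁ + γ₀) * t)
        * ((r₁ - r₂) / ((x - r₂) - (x - r₁) * Real.exp (A * (r₁ - r₂) * t))) ^ (α₀ / A)) :
    (∀ x t, r₂ < x →
        0 < (r₁ - r₂) / ((x - r₂) - (x - r₁) * Real.exp (A * (r₁ - r₂) * t)) →
        deriv (fun s => w x s) t
          = A * (x - r₁) * (x - r₂) * deriv (fun y => w y t) x + (α₀ * x + γ₀) * w x t)
      ∧ (∀ x, w x 0 = 1) :=
  stmt_4_general A α₀ γ₀ r₁ r₂ hA hr w hw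
end

section
/- In the complex-root case Q(x) = A((x-p)² + q²) with q > 0, the function w(x,t) = exp((α₀ p + γ₀) t) · [ q / ( √((x-p)²+q²) · cos(A q t + arctan((x-p)/q)) ) ]^{α₀/A} satisfies ∂w/∂t = A((x-p)²+q²)·∂w/∂x + (α₀ x + γ₀) w with w(x,0)=1, on the region where the cosine is positive. -/
/-!
Write `r = √((x-p)² + q²)` and `θ = Aqt + arctan((x-p)/q)`, so that `w = e^{(α₀p+γ₀)t} B^{α₀/A}`
with `B = q / (r cos θ)`. Logarithmic differentiation gives `∂ₜ log B = Aq tan θ` and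
`∂ₓ log B = (q tan θ - (x-p)) / r²`, since `∂ₓ θ = q / r²`. Hence
`∂ₜ log w = α₀p + γ₀ + α₀ q tan θ = A r² ∂ₓ log w + α₀x + γ₀`. At `t = 0` we have
`r cos θ = q`, so `B = 1`.
-/

open Real

noncomputable section

def complexRootBase (A q p x t : ℝ) : ℝ :=
  q / (√((x - p) ^ 2 + q ^ 2) * cos (A * q * t + arctan ((x - p) / q)))

theorem HasDerivAt.rpow_const_of_eq_mul {g : ℝ → ℝ} {x L k : ℝ}
    (hg : HasDerivAt g (g x * L) x) (hx : g x ≠ 0) :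
    HasDerivAt (fun y => g y ^ k) (g x ^ k * (k * L)) x := by
  convert hg.rpow_const (p := k) (Or.inl hx) using 1
  rw [rpow_sub_one hx]
  field_simp

theorem sqrt_sq_add_sq_mul_cos_arctan {q : ℝ} (hq : 0 < q) (y : ℝ) :
    √(y ^ 2 + q ^ 2) * cos (arctan (y / q)) = q := by
  have h : 1 + (y / q) ^ 2 = (y ^ 2 + q ^ 2) / q ^ 2 := by field_simp; ring
  rw [cos_arctan, h, sqrt_div' _ (sq_nonneg q), sqrt_sq hq.le]
  have : 0 < √(y ^ 2 + q ^ 2) := sqrt_pos.mpr (by positivity)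
  field_simp

theorem complexRootBase_zero {q : ℝ} (hq : 0 < q) (A p x : ℝ) :
    complexRootBase A q p x 0 = 1 := by
  rw [complexRootBase, mul_zero, zero_add, sqrt_sq_add_sq_mul_cos_arctan hq,
    div_self hq.ne']

section
variable {A q p x t : ℝ}

theorem complexRootBase_pos (hq : 0 < q)
    (hc : 0 < cos (A * q * t + arctan ((x - p) / q))) : 0 < complexRootBase A q p x t :=
  div_pos hq (mul_pos (sqrt_pos.mpr (by positivity)) hc)

theorem hasDerivAt_complexRootBase_time (hq : q ≠ 0)
    (hc : cos (A * q * t + arctan ((x - p) / q)) ≠ 0) :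
    HasDerivAt (fun s => complexRootBase A q p x s)
      (complexRootBase A q p x t * (A * q * tan (A * q * t + arctan ((x - p) / q)))) t := by
  have hr : √((x - p) ^ 2 + q ^ 2) ≠ 0 := (sqrt_pos.mpr (by positivity)).ne'
  have hθ : HasDerivAt (fun s => A * q * s + arctan ((x - p) / q)) (A * q) t := by
    simpa using ((hasDerivAt_id' t).const_mul (A * q)).add_const (arctan ((x - p) / q))
  unfold complexRootBase
  refine ((hasDerivAt_const t q).div (hθ.cos.const_mul _) (mul_ne_zero hr hc)).congr_deriv ?_
  rw [tan_eq_sin_div_cos]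
  field_simp
  ring

theorem hasDerivAt_complexRootBase_space (hq : q ≠ 0)
    (hc : cos (A * q * t + arctan ((x - p) / q)) ≠ 0) :
    HasDerivAt (fun y => complexRootBase A q p y t)
      (complexRootBase A q p x t *
        ((q * tan (A * q * t + arctan ((x - p) / q)) - (x - p)) / ((x - p) ^ 2 + q ^ 2))) x := by
  have hR : 0 < (x - p) ^ 2 + q ^ 2 := by positivity
  have hr : √((x - p) ^ 2 + q ^ 2) ≠ 0 := (sqrt_pos.mpr hR).ne'
  have hsq : HasDerivAt (fun y => (y - p) ^ 2 + q ^ 2) (2 * (x - p)) x := by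
    simpa using (((hasDerivAt_id' x).sub_const p).pow 2).add_const (q ^ 2)
  have hθ : HasDerivAt (fun y => A * q * t + arctan ((y - p) / q))
      (q / ((x - p) ^ 2 + q ^ 2)) x := by
    refine ((((hasDerivAt_id' x).sub_const p).div_const q).arctan.const_add _).congr_deriv ?_
    field_simp
    ring
  have hden : HasDerivAt (fun y => √((y - p) ^ 2 + q ^ 2) * cos (A * q * t + arctan ((y - p) / q)))
      _ x := (hsq.sqrt hR.ne').mul hθ.cos
  unfold complexRootBase
  refine ((hasDerivAt_const x q).div hden (mul_ne_zero hr hc)).congr_deriv ?_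
  have hsqrt : √((x - p) ^ 2 + q ^ 2) ^ 2 = (x - p) ^ 2 + q ^ 2 := sq_sqrt hR.le
  rw [tan_eq_sin_div_cos]
  generalize √((x - p) ^ 2 + q ^ 2) = r at hr hsqrt ⊢
  rw [← hsqrt]
  field_simp
  ring

end

theorem stmt_5_general (A q α₀ p γ₀ : ℝ) (hA : 0 < A) (hq : 0 < q)
    (w : ℝ → ℝ → ℝ)
    (hw : ∀ x t, w x t
      = Real.exp ((α₀ * p + γ₀) * t)
        * (q / (Real.sqrt ((x - p) ^ 2 + q ^ 2)
            * Real.cos (A * q * t + Real.arctan ((x - p) / q)))) ^ (α₀ / A)) :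
    (∀ x t, 0 < Real.cos (A * q * t + Real.arctan ((x - p) / q)) →
        deriv (fun s => w x s) t
          = A * ((x - p) ^ 2 + q ^ 2) * deriv (fun y => w y t) x + (α₀ * x + γ₀) * w x t)
      ∧ (∀ x, w x 0 = 1) := by
  obtain rfl : w = fun x t => exp ((α₀ * p + γ₀) * t) * complexRootBase A q p x t ^ (α₀ / A) :=
    funext fun x => funext fun t => hw x t
  refine ⟨fun x t hc => ?_, fun x => by simp [complexRootBase_zero hq]⟩
  beta_reduce
  have hB := complexRootBase_pos hq hc
  have hexp : HasDerivAt (fun s => exp ((α₀ * p + γ₀) * s))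
      (exp ((α₀ * p + γ₀) * t) * (α₀ * p + γ₀)) t := by
    simpa using ((hasDerivAt_id' t).const_mul (α₀ * p + γ₀)).exp
  have htime :
      HasDerivAt (fun s => exp ((α₀ * p + γ₀) * s) * complexRootBase A q p x s ^ (α₀ / A)) _ t :=
    hexp.mul ((hasDerivAt_complexRootBase_time hq.ne' hc.ne').rpow_const_of_eq_mul hB.ne'
      (k := α₀ / A))
  have hspace := ((hasDerivAt_complexRootBase_space hq.ne' hc.ne').rpow_const_of_eq_mul hB.ne'
    (k := α₀ / A)).const_mul (exp ((α₀ * p + γ₀) * t))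
  have hA0 : A ≠ 0 := hA.ne'
  rw [htime.deriv, hspace.deriv]
  field_simp
  ring

/-- Complex-root case `Q(x) = A((x-p)² + q²)`: the function
`w(x,t) = exp((α₀ p + γ₀)t) [ q / (√((x-p)²+q²) cos(Aqt + arctan((x-p)/q))) ]^{α₀/A}`
solves `∂w/∂t = A((x-p)²+q²) ∂w/∂x + (α₀ x + γ₀) w` with `w(x,0)=1`,
on the region where the cosine is positive. -/
theorem stmt_5 (A q α₀ p γ₀ : ℝ) (hA : 0 < A) (hq : 0 < q) (hα : 0 < α₀)
    (w : ℝ → ℝ → ℝ)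
    (hw : ∀ x t, w x t
      = Real.exp ((α₀ * p + γ₀) * t)
        * (q / (Real.sqrt ((x - p) ^ 2 + q ^ 2)
            * Real.cos (A * q * t + Real.arctan ((x - p) / q)))) ^ (α₀ / A)) :
    (∀ x t, 0 < Real.cos (A * q * t + Real.arctan ((x - p) / q)) →
        deriv (fun s => w x s) t
          = A * ((x - p) ^ 2 + q ^ 2) * deriv (fun y => w y t) x + (α₀ * x + γ₀) * w x t)
      ∧ (∀ x, w x 0 = 1) :=
  stmt_5_general A q α₀ p γ₀ hA hq w hw
end
end

section
/- In the double-root case with r < 0, for each u ∈ (0,1) the Legendre transform I(u) = sup_{θ∈ℝ} (u θ - F(θ)) of F(θ) = log(A(e^θ - r)) − log(A(1 − r)) (normalized so F(0)=0) equals u log u + (1-u) log(1-u) + (u-1) log(-r) + log(1-r). -/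
lemma key_bound (r : ℝ) (hr : r < 0) (u : ℝ) (hu0 : 0 < u) (hu1 : u < 1) (θ : ℝ) :
    u * θ - Real.log (Real.exp θ - r)
      ≤ u * Real.log u + (1 - u) * Real.log (1 - u) + (u - 1) * Real.log (-r) := by
  have hx : 0 < Real.exp θ := Real.exp_pos θ
  have h1u : 0 < 1 - u := by linarith
  have hrp : 0 < -r := by linarith
  have hgm := Real.geom_mean_le_arith_mean2_weighted hu0.le h1u.le
    (div_pos hx hu0).le (div_pos hrp h1u).le (by ring)
  have hR : u * (Real.exp θ / u) + (1 - u) * (-r / (1 - u)) = Real.exp θ - r := by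
    field_simp; ring
  rw [hR] at hgm
  have hLpos : 0 < (Real.exp θ / u) ^ u * (-r / (1 - u)) ^ (1 - u) := by positivity
  have hlog := Real.log_le_log hLpos hgm
  rw [Real.log_mul (by positivity) (by positivity),
    Real.log_rpow (by positivity), Real.log_rpow (by positivity),
    Real.log_div hx.ne' hu0.ne', Real.log_div hrp.ne' h1u.ne',
    Real.log_exp] at hlog
  nlinarith [hlog]

lemma key_eq (r : ℝ) (hr : r < 0) (u : ℝ) (hu0 : 0 < u) (hu1 : u < 1) :
    u * Real.log (u * (-r) / (1 - u)) - Real.log (Real.exp (Real.log (u * (-r) / (1 - u))) - r)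
      = u * Real.log u + (1 - u) * Real.log (1 - u) + (u - 1) * Real.log (-r) := by
  have h1u : 0 < 1 - u := by linarith
  have hrp : 0 < -r := by linarith
  have hxp : 0 < u * (-r) / (1 - u) := by positivity
  rw [Real.exp_log hxp]
  have h2 : u * (-r) / (1 - u) - r = (-r) / (1 - u) := by field_simp; ring
  rw [h2, Real.log_div hrp.ne' h1u.ne',
    Real.log_div (by positivity) h1u.ne', Real.log_mul hu0.ne' hrp.ne']
  ring

/-- Double-root case with `r < 0`: the Legendre transform
`I(u) = sup_θ (uθ - F(θ))` of `F(θ) = log((e^θ - r)/(1-r))` equals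
`u log u + (1-u) log(1-u) + (u-1) log(-r) + log(1-r)` for `u ∈ (0,1)`. -/
theorem stmt_10 (r : ℝ) (hr : r < 0) (F : ℝ → ℝ)
    (hF : ∀ θ, F θ = Real.log (Real.exp θ - r) - Real.log (1 - r)) :
    ∀ u ∈ Set.Ioo (0 : ℝ) 1,
      (⨆ θ : ℝ, (u * θ - F θ))
        = u * Real.log u + (1 - u) * Real.log (1 - u)
          + (u - 1) * Real.log (-r) + Real.log (1 - r) := by
  rintro u ⟨hu0, hu1⟩
  have hbound : ∀ θ : ℝ, u * θ - F θ
      ≤ u * Real.log u + (1 - u) * Real.log (1 - u) + (u - 1) * Real.log (-r)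
        + Real.log (1 - r) := by
    intro θ
    rw [hF]
    have := key_bound r hr u hu0 hu1 θ
    linarith
  apply le_antisymm
  · exact ciSup_le hbound
  · have hb : BddAbove (Set.range fun θ : ℝ => u * θ - F θ) :=
      ⟨_, by rintro x ⟨θ, rfl⟩; exact hbound θ⟩
    have hle := le_ciSup hb (Real.log (u * (-r) / (1 - u)))
    have heq := key_eq r hr u hu0 hu1
    rw [hF] at hle
    linarith
end

section
/- In the constant-drift balanced case (A=B=0), the polynomials P_n defined by P₀ = 1 and P_{n+1}(x) = C P_n'(x) + (α₀ x + γ₀) P_n(x) satisfy P_n(x) = H_n(α₀ x + γ₀, α₀ C), where H_n(X,Y) are the Hermite–Kampé de Fériet polynomials defined by the two-variable recurrence H₀(X,Y)=1, H_{n+1}(X,Y) = X H_n(X,Y) + n Y H_{n-1}(X,Y). -/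
/-! The recurrence `H_{n+1} = X H_n + n Y H_{n-1}` makes `(H_n(·, Y))` an Appell sequence,
`∂_X H_n = n H_{n-1}`. Hence `x ↦ H_n(α₀ x + γ₀, α₀ C)` has derivative `n α₀ H_{n-1}`, and
`C` times it plus `(α₀ x + γ₀) H_n` is again the recurrence with `Y = α₀ C`: these functions
satisfy the recursion defining `P_n`. -/

namespace HermiteKampeDeFeriet

variable {𝕜 : Type*} [NontriviallyNormedField 𝕜] {Y : 𝕜} {H : ℕ → 𝕜 → 𝕜}

/-- The recurrence with a truncated index `n - 1`, harmless since its coefficient is `n`. -/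
theorem succ_eq (h0 : ∀ X, H 0 X = 1) (h1 : ∀ X, H 1 X = X)
    (hrec : ∀ (n : ℕ) X, H (n + 2) X = X * H (n + 1) X + (n + 1) * Y * H n X)
    (n : ℕ) (X : 𝕜) : H (n + 1) X = X * H n X + n * Y * H (n - 1) X := by
  cases n with
  | zero => simp [h0, h1]
  | succ n => simpa using hrec n X

theorem hasDerivAt (h0 : ∀ X, H 0 X = 1) (h1 : ∀ X, H 1 X = X)
    (hrec : ∀ (n : ℕ) X, H (n + 2) X = X * H (n + 1) X + (n + 1) * Y * H n X)
    (n : ℕ) (X : 𝕜) : HasDerivAt (H n) (n * H (n - 1) X) X := by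
  induction n using Nat.twoStepInduction generalizing X with
  | zero =>
    rw [funext h0]
    simpa using hasDerivAt_const X (1 : 𝕜)
  | one =>
    rw [funext h1]
    simpa [h0] using hasDerivAt_id' X
  | more n ih₀ ih₁ =>
    rw [funext (hrec n)]
    refine (((hasDerivAt_id' X).mul (ih₁ X)).add ((ih₀ X).const_mul ((n + 1) * Y))).congr_deriv ?_
    rw [Nat.add_sub_cancel, show n + 2 - 1 = n + 1 from rfl, succ_eq h0 h1 hrec n X]
    push_cast
    ring

theorem hasDerivAt_comp_affine (h0 : ∀ X, H 0 X = 1) (h1 : ∀ X, H 1 X = X)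
    (hrec : ∀ (n : ℕ) X, H (n + 2) X = X * H (n + 1) X + (n + 1) * Y * H n X)
    (n : ℕ) (a b x : 𝕜) :
    HasDerivAt (fun x => H n (a * x + b)) (n * a * H (n - 1) (a * x + b)) x := by
  have haffine : HasDerivAt (fun x => a * x + b) a x := by
    simpa using ((hasDerivAt_id x).const_mul a).add_const b
  refine ((hasDerivAt h0 h1 hrec n (a * x + b)).comp x haffine).congr_deriv ?_
  ring

end HermiteKampeDeFeriet

/-- Constant-drift balanced case (`A = B = 0`): the polynomials `P₀ = 1`,
`P_{n+1}(x) = C P_n'(x) + (α₀ x + γ₀) P_n(x)` satisfy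
`P_n(x) = H_n(α₀ x + γ₀, α₀ C)`, where `H_n` are the Hermite–Kampé de Fériet
polynomials given by `H₀ = 1`, `H₁(X,Y) = X`,
`H_{n+2}(X,Y) = X H_{n+1}(X,Y) + (n+1) Y H_n(X,Y)`. -/
theorem stmt_13 (α₀ γ₀ C : ℝ)
    (H : ℕ → ℝ → ℝ → ℝ)
    (hH0 : ∀ X Y, H 0 X Y = 1)
    (hH1 : ∀ X Y, H 1 X Y = X)
    (hHrec : ∀ (n : ℕ) (X Y : ℝ),
      H (n + 2) X Y = X * H (n + 1) X Y + (n + 1 : ℝ) * Y * H n X Y)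
    (P : ℕ → ℝ → ℝ)
    (hP0 : ∀ x, P 0 x = 1)
    (hPrec : ∀ (n : ℕ) (x : ℝ),
      P (n + 1) x = C * deriv (P n) x + (α₀ * x + γ₀) * P n x) :
    ∀ (n : ℕ) (x : ℝ), P n x = H n (α₀ * x + γ₀) (α₀ * C) := by
  set Y := α₀ * C
  have h0 : ∀ X, H 0 X Y = 1 := fun X => hH0 X Y
  have h1 : ∀ X, H 1 X Y = X := fun X => hH1 X Y
  have hrec : ∀ (n : ℕ) X, H (n + 2) X Y = X * H (n + 1) X Y + (n + 1) * Y * H n X Y :=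
    fun n X => hHrec n X Y
  suffices hP : ∀ n, P n = fun x => H n (α₀ * x + γ₀) Y from fun n x => congrFun (hP n) x
  intro n
  induction n with
  | zero => exact funext fun x => (hP0 x).trans (hH0 _ _).symm
  | succ n ih =>
    funext x
    have hderiv := HermiteKampeDeFeriet.hasDerivAt_comp_affine (H := fun n X => H n X Y)
      h0 h1 hrec n α₀ γ₀ x
    rw [hPrec, ih, hderiv.deriv, HermiteKampeDeFeriet.succ_eq (H := fun n X => H n X Y) h0 h1 hrec]
    ring
end
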